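/- arXiv:1304.4904 — 4 statements merged into one kernel-verified Lean document; each statement's English description precedes it below -/
import Mathlib

section
/- The maximum of S = (8/N)·Σ_{k=0}^{N} k·p_k·3^k·binomial(N,k) − 4, over all choices of real numbers p_k with 0 ≤ p_k ≤ Q for all k and Σ_{k=0}^{N} p_k·3^k·binomial(N,k) = 1 (where Q ≥ 4^{−N} so the feasible set is nonempty), is attained by the 'greedy' assignment: p_k = Q for all k > l'−1, p_k = 0 for all k < l'−1, and p_{l'−1} chosen to satisfy the normalization, where l' is the smallest index such that Q·Σ_{k=l'}^{N} 3^k·binomial(N,k) ≤ 1. -/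
open Finset

/-- The weighted objective of the N-run CHSH linear program. -/
noncomputable def chshObj (N : ℕ) (p : ℕ → ℝ) : ℝ :=
  (8 / N) * ∑ k ∈ Finset.range (N + 1),
    (k : ℝ) * p k * 3 ^ k * (N.choose k : ℝ) - 4

/-- The tail weight `Σ_{k=l}^{N} 3^k C(N,k)`. -/
def chshTail (N l : ℕ) : ℕ := ∑ k ∈ Finset.Icc l N, 3 ^ k * N.choose k

/-- The greedy assignment: `Q` above the cutoff `l'`, the normalisation
remainder at `l' - 1`, and `0` below. -/
noncomputable def chshGreedy (N l' : ℕ) (Q : ℝ) : ℕ → ℝ := fun k =>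
  if l' ≤ k then Q
  else if k + 1 = l' then
    (1 - Q * (chshTail N l' : ℝ)) / ((3 : ℝ) ^ k * (N.choose k : ℝ))
  else 0

/-!
The problem is a fractional knapsack: maximise `∑ k x_k` over masses `x_k = p_k 3^k C(N,k)` of
total `1`, each capped by `Q 3^k C(N,k)`. The greedy assignment fills the indices from the top
down, so with the threshold `t = l' - 1` every feasible `p` satisfies
`(k - t) (greedy_k - p_k) ≥ 0` termwise; summing against the weights and using that both
assignments have the same total mass gives `∑ k greedy_k w_k ≥ ∑ k p_k w_k`.
-/

theorem sum_mul_le_sum_mul_of_sub_mul_sub_nonneg {ι R : Type*} [CommRing R] [LinearOrder R]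
    [IsStrictOrderedRing R] (s : Finset ι) (c w p q : ι → R) (t : R)
    (hw : ∀ i ∈ s, 0 ≤ w i) (hcross : ∀ i ∈ s, 0 ≤ (c i - t) * (q i - p i))
    (hmass : ∑ i ∈ s, p i * w i = ∑ i ∈ s, q i * w i) :
    ∑ i ∈ s, c i * (p i * w i) ≤ ∑ i ∈ s, c i * (q i * w i) := by
  have hsplit : ∑ i ∈ s, c i * (q i * w i) - ∑ i ∈ s, c i * (p i * w i) =
      ∑ i ∈ s, (c i - t) * (q i - p i) * w i +
        t * (∑ i ∈ s, q i * w i - ∑ i ∈ s, p i * w i) := by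
    simp only [mul_sub, Finset.mul_sum, ← Finset.sum_sub_distrib, ← Finset.sum_add_distrib]
    exact sum_congr rfl fun i _ => by ring
  rw [hmass, sub_self, mul_zero, add_zero] at hsplit
  have := sum_nonneg fun i hi => mul_nonneg (hcross i hi) (hw i hi)
  linarith

theorem chshObj_le_chshObj {N : ℕ} {p q : ℕ → ℝ}
    (h : ∑ k ∈ range (N + 1), (k : ℝ) * p k * 3 ^ k * (N.choose k : ℝ) ≤
      ∑ k ∈ range (N + 1), (k : ℝ) * q k * 3 ^ k * (N.choose k : ℝ)) :
    chshObj N p ≤ chshObj N q := by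
  unfold chshObj
  gcongr

theorem cast_chshTail (N l : ℕ) :
    (chshTail N l : ℝ) = ∑ k ∈ Icc l N, (3 : ℝ) ^ k * (N.choose k : ℝ) := by
  simp [chshTail]

theorem chshTail_eq_add_chshTail_succ (N m : ℕ) :
    chshTail N m = 3 ^ m * N.choose m + chshTail N (m + 1) := by
  unfold chshTail
  by_cases h : m ≤ N
  · rw [Icc_add_one_left_eq_Ioc, ← Ioc_insert_left h, sum_insert (by simp)]
  · rw [Icc_eq_empty h, Icc_eq_empty (by omega), Nat.choose_eq_zero_of_lt (not_le.mp h)]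
    simp

theorem chshTail_zero (N : ℕ) : chshTail N 0 = 4 ^ N := by
  have h := add_pow 3 1 N (R := ℕ)
  simp only [one_pow, mul_one] at h
  rw [chshTail, show (4 : ℕ) = 3 + 1 from rfl, h, ← Ico_add_one_right_eq_Icc, ← range_eq_Ico]
  rfl

section Greedy

variable {N l' k : ℕ} {Q : ℝ}

theorem chshGreedy_of_le (h : l' ≤ k) : chshGreedy N l' Q k = Q := by
  simp [chshGreedy, h]

theorem chshGreedy_of_succ_eq (h : k + 1 = l') :
    chshGreedy N l' Q k = (1 - Q * chshTail N l') / ((3 : ℝ) ^ k * (N.choose k : ℝ)) := by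
  simp [chshGreedy, h, show ¬ l' ≤ k by omega]

theorem chshGreedy_of_succ_lt (h : k + 1 < l') : chshGreedy N l' Q k = 0 := by
  simp [chshGreedy, h.ne, show ¬ l' ≤ k by omega]

theorem chshGreedy_mem_Icc (hQ : 0 ≤ Q) (htail : Q * chshTail N l' ≤ 1)
    (hprev : ∀ m < l', 1 < Q * chshTail N m) (k : ℕ) :
    0 ≤ chshGreedy N l' Q k ∧ chshGreedy N l' Q k ≤ Q := by
  rcases lt_trichotomy (k + 1) l' with hlt | heq | hgt
  · simp [chshGreedy_of_succ_lt hlt, hQ]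
  · rw [chshGreedy_of_succ_eq heq]
    have hk := hprev k (by omega)
    rw [chshTail_eq_add_chshTail_succ, heq] at hk
    push_cast at hk
    exact ⟨div_nonneg (by linarith) (by positivity),
      div_le_of_le_mul₀ (by positivity) hQ (by linarith)⟩
  · simp [chshGreedy_of_le (show l' ≤ k by omega), hQ]

theorem sum_chshGreedy_mul (hl'N : l' ≤ N + 1) (htail : Q * chshTail N l' ≤ 1)
    (hfeas : 1 ≤ Q * chshTail N 0) :
    ∑ k ∈ range (N + 1), chshGreedy N l' Q k * 3 ^ k * (N.choose k : ℝ) = 1 := by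
  have hupper : ∑ k ∈ Ico l' (N + 1), chshGreedy N l' Q k * 3 ^ k * (N.choose k : ℝ) =
      Q * chshTail N l' := by
    rw [cast_chshTail, mul_sum, Ico_add_one_right_eq_Icc]
    refine sum_congr rfl fun k hk => ?_
    rw [chshGreedy_of_le (mem_Icc.mp hk).1, mul_assoc]
  rw [← sum_range_add_sum_Ico _ hl'N, hupper]
  rcases l' with _ | m
  · simp only [range_zero, sum_empty, zero_add]
    exact le_antisymm htail hfeas
  · have hw : (3 : ℝ) ^ m * (N.choose m : ℝ) ≠ 0 := by
      have := Nat.choose_pos (show m ≤ N by omega)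
      positivity
    have hlower : ∑ k ∈ range m, chshGreedy N (m + 1) Q k * 3 ^ k * (N.choose k : ℝ) = 0 :=
      sum_eq_zero fun k hk => by rw [chshGreedy_of_succ_lt (by simp at hk; omega)]; ring
    rw [sum_range_succ, hlower, chshGreedy_of_succ_eq rfl, mul_assoc, div_mul_cancel₀ _ hw]
    ring

theorem sub_mul_chshGreedy_sub_nonneg {x : ℝ} (hx : 0 ≤ x ∧ x ≤ Q) :
    0 ≤ ((k : ℝ) - ((l' : ℝ) - 1)) * (chshGreedy N l' Q k - x) := by
  rcases lt_trichotomy (k + 1) l' with hlt | heq | hgt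
  · rw [chshGreedy_of_succ_lt hlt]
    have : (k : ℝ) + 1 < l' := by exact_mod_cast hlt
    nlinarith
  · have : (k : ℝ) + 1 = l' := by exact_mod_cast heq
    simp [show (k : ℝ) - (l' - 1) = 0 by linarith]
  · rw [chshGreedy_of_le (show l' ≤ k by omega)]
    have : (l' : ℝ) < k + 1 := by exact_mod_cast hgt
    nlinarith

end Greedy

theorem greedy_optimal_for_CHSH_LP_general (N : ℕ) (Q : ℝ)
    (hQ : ((4 : ℝ) ^ N)⁻¹ ≤ Q)
    (l' : ℕ) (hl'N : l' ≤ N + 1)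
    (hl'1 : Q * (chshTail N l' : ℝ) ≤ 1)
    (hl'2 : ∀ m < l', ¬ (Q * (chshTail N m : ℝ) ≤ 1)) :
    ((∀ k, 0 ≤ chshGreedy N l' Q k ∧ chshGreedy N l' Q k ≤ Q) ∧
      ∑ k ∈ Finset.range (N + 1),
        chshGreedy N l' Q k * 3 ^ k * (N.choose k : ℝ) = 1) ∧
    ∀ p : ℕ → ℝ,
      (∀ k, 0 ≤ p k ∧ p k ≤ Q) →
      (∑ k ∈ Finset.range (N + 1), p k * 3 ^ k * (N.choose k : ℝ) = 1) →
      chshObj N p ≤ chshObj N (chshGreedy N l' Q) := by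
  have hQ0 : 0 ≤ Q := le_trans (by positivity) hQ
  have hfeas : 1 ≤ Q * chshTail N 0 := by
    rw [chshTail_zero, Nat.cast_pow, Nat.cast_ofNat]
    exact (inv_le_iff_one_le_mul₀ (by positivity)).mp hQ
  have hnorm := sum_chshGreedy_mul hl'N hl'1 hfeas
  refine ⟨⟨chshGreedy_mem_Icc hQ0 hl'1 fun m hm => not_le.mp (hl'2 m hm), hnorm⟩,
    fun p hp hpnorm => chshObj_le_chshObj ?_⟩
  simp only [mul_assoc] at hnorm hpnorm ⊢
  exact sum_mul_le_sum_mul_of_sub_mul_sub_nonneg _ _ _ _ _ ((l' : ℝ) - 1)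
    (fun k _ => by positivity) (fun k _ => sub_mul_chshGreedy_sub_nonneg (hp k))
    (hpnorm.trans hnorm.symm)

theorem greedy_optimal_for_CHSH_LP (N : ℕ) (hN : 0 < N) (Q : ℝ)
    (hQ : ((4 : ℝ) ^ N)⁻¹ ≤ Q)
    (l' : ℕ) (hl'N : l' ≤ N + 1)
    (hl'1 : Q * (chshTail N l' : ℝ) ≤ 1)
    (hl'2 : ∀ m < l', ¬ (Q * (chshTail N m : ℝ) ≤ 1)) :
    ((∀ k, 0 ≤ chshGreedy N l' Q k ∧ chshGreedy N l' Q k ≤ Q) ∧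
      ∑ k ∈ Finset.range (N + 1),
        chshGreedy N l' Q k * 3 ^ k * (N.choose k : ℝ) = 1) ∧
    ∀ p : ℕ → ℝ,
      (∀ k, 0 ≤ p k ∧ p k ≤ Q) →
      (∑ k ∈ Finset.range (N + 1), p k * 3 ^ k * (N.choose k : ℝ) = 1) →
      chshObj N p ≤ chshObj N (chshGreedy N l' Q) :=
  greedy_optimal_for_CHSH_LP_general N Q hQ l' hl'N hl'1 hl'2
end

section
/- For R ∈ [1/4, 3/10), the quantity S_Q(R) = 4(1−2R)^{3/2}/√(1−3R) is strictly greater than S_C(R) = 4(6R−1), and at R = 3/10 they are equal (both equal 16/5). -/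
open Real

/-!
Both values are nonnegative on the range in question, so it suffices to compare squares, and
clearing the denominator `1 - 3R` leaves the polynomial identity
`(1 - 2R)³ - (1 - 3R)(6R - 1)² = R (10R - 3)²`.
Its right-hand side is positive for `0 < R ≠ 3/10` and vanishes at `R = 3/10`, where the two
values touch.
-/

noncomputable def chshQuantumValue (R : ℝ) : ℝ :=
  4 * (1 - 2 * R) ^ ((3 : ℝ) / 2) / √(1 - 3 * R)

def chshClassicalValue (R : ℝ) : ℝ :=
  4 * (6 * R - 1)

lemma rpow_three_halves_sq {x : ℝ} (hx : 0 ≤ x) : (x ^ ((3 : ℝ) / 2)) ^ 2 = x ^ 3 := by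
  rw [← Real.rpow_natCast (x ^ _), ← Real.rpow_mul hx]
  norm_num

lemma chshQuantumValue_nonneg {R : ℝ} (hR : R ≤ 1 / 2) : 0 ≤ chshQuantumValue R := by
  have : 0 ≤ 1 - 2 * R := by linarith
  unfold chshQuantumValue
  positivity

lemma chshQuantumValue_sq {R : ℝ} (hR : R < 1 / 3) :
    chshQuantumValue R ^ 2 = 16 * (1 - 2 * R) ^ 3 / (1 - 3 * R) := by
  rw [chshQuantumValue, div_pow, mul_pow, rpow_three_halves_sq (by linarith),
    Real.sq_sqrt (by linarith)]
  ring

lemma chshClassicalValue_sq_lt {R : ℝ} (h0 : 0 < R) (hR : R < 1 / 3) (hne : R ≠ 3 / 10) :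
    chshClassicalValue R ^ 2 < 16 * (1 - 2 * R) ^ 3 / (1 - 3 * R) := by
  have gap : (1 - 2 * R) ^ 3 - (1 - 3 * R) * (6 * R - 1) ^ 2 = R * (10 * R - 3) ^ 2 := by ring
  have gap_pos : 0 < R * (10 * R - 3) ^ 2 :=
    mul_pos h0 (even_two.pow_pos (sub_ne_zero.mpr (by contrapose! hne; linarith)))
  rw [lt_div_iff₀ (by linarith), chshClassicalValue]
  nlinarith

theorem chshClassicalValue_lt_chshQuantumValue {R : ℝ} (h0 : 0 < R) (hR : R < 1 / 3)
    (hne : R ≠ 3 / 10) : chshClassicalValue R < chshQuantumValue R := by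
  refine lt_of_pow_lt_pow_left₀ 2 (chshQuantumValue_nonneg (by linarith)) ?_
  rw [chshQuantumValue_sq hR]
  exact chshClassicalValue_sq_lt h0 hR hne

theorem chshQuantumValue_three_tenths : chshQuantumValue (3 / 10) = 16 / 5 := by
  refine (pow_left_inj₀ (chshQuantumValue_nonneg (by norm_num)) (by norm_num) two_ne_zero).mp ?_
  rw [chshQuantumValue_sq (by norm_num)]
  norm_num

theorem quantum_beats_classical (R : ℝ) (h1 : 1/4 ≤ R) (h2 : R < 3/10) :
    4 * (1 - 2 * R) ^ ((3 : ℝ) / 2) / Real.sqrt (1 - 3 * R) > 4 * (6 * R - 1) ∧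
    4 * (1 - 2 * (3/10 : ℝ)) ^ ((3 : ℝ) / 2) / Real.sqrt (1 - 3 * (3/10)) = 16/5 ∧
    4 * (6 * (3/10 : ℝ) - 1) = 16/5 := by
  refine ⟨?_, chshQuantumValue_three_tenths, by norm_num⟩
  exact chshClassicalValue_lt_chshQuantumValue (by linarith) (by linarith) h2.ne
end

section
/- Let N ≥ 1 and define the probability vector p on k ∈ {0,…,N} by p_N = 3^{−N} and p_k = 0 for k < N (so that Σ_k binomial(N,k)·3^k·p_k = 1). Then M_1 := Σ_{k=0}^{N} binomial(N,k)·3^k·|p_k − 4^{−N}| = 2·(1 − (3/4)^N). -/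
/-!
Weight the outcome class `k` by its size `w k = C(N,k) 3^k`, so that the weights sum to `4^N`
by the binomial theorem. A point mass of total weight one on a single class `i` lies at L1
distance `2 (1 - w i / ∑ w)` from the uniform distribution: the class `i` itself contributes
`1 - w i / ∑ w`, and the uniform mass missing from all other classes contributes the same.
With `w N = 3^N` this is `2 (1 - (3/4)^N)`.
-/

open Finset

theorem sum_range_choose_mul_pow {R : Type*} [CommSemiring R] (x : R) (n : ℕ) :
    ∑ k ∈ range (n + 1), (n.choose k : R) * x ^ k = (x + 1) ^ n := by
  rw [add_pow]
  exact sum_congr rfl fun k _ => by rw [one_pow, mul_one, mul_comm]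

section PointMass

variable {ι : Type*} [DecidableEq ι] (s : Finset ι) (w : ι → ℝ) {i : ι}

theorem sum_mul_ite_eq_inv (hi : i ∈ s) (hwi : w i ≠ 0) :
    ∑ k ∈ s, w k * (if k = i then (w i)⁻¹ else 0) = 1 := by
  simp only [mul_ite, mul_zero, sum_ite_eq', if_pos hi, mul_inv_cancel₀ hwi]

theorem sum_mul_abs_ite_sub_inv_sum (hw : ∀ k ∈ s, 0 ≤ w k) (hi : i ∈ s) (hwi : 0 < w i) :
    ∑ k ∈ s, w k * |(if k = i then (w i)⁻¹ else 0) - (∑ j ∈ s, w j)⁻¹|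
      = 2 * (1 - w i / ∑ j ∈ s, w j) := by
  set W := ∑ j ∈ s, w j
  have hwiW : w i ≤ W := single_le_sum hw hi
  have hW : 0 < W := hwi.trans_le hwiW
  have hterm : ∀ k ∈ s, w k * |(if k = i then (w i)⁻¹ else 0) - W⁻¹|
      = w k * W⁻¹ + if k = i then 1 - 2 * (w i / W) else 0 := by
    intro k _
    split_ifs with hk
    · subst hk
      have : W⁻¹ ≤ (w k)⁻¹ := inv_anti₀ hwi hwiW
      rw [abs_of_nonneg (sub_nonneg.2 this), mul_sub, mul_inv_cancel₀ hwi.ne', div_eq_mul_inv]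
      ring
    · rw [zero_sub, abs_neg, abs_of_pos (inv_pos.2 hW), add_zero]
  rw [sum_congr rfl hterm, sum_add_distrib, sum_ite_eq', if_pos hi, ← sum_mul,
    mul_inv_cancel₀ hW.ne']
  ring

end PointMass

theorem all_correct_strategy_L1_MD_general (N : ℕ) (p : ℕ → ℝ)
    (hp : ∀ k, p k = if k = N then ((3 : ℝ) ^ N)⁻¹ else 0) :
    (∑ k ∈ Finset.range (N + 1), (N.choose k : ℝ) * 3 ^ k * p k = 1) ∧
    ∑ k ∈ Finset.range (N + 1),
        (N.choose k : ℝ) * 3 ^ k * |p k - ((4 : ℝ) ^ N)⁻¹|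
      = 2 * (1 - (3/4) ^ N) := by
  let w : ℕ → ℝ := fun k => (N.choose k : ℝ) * 3 ^ k
  have hwN : w N = 3 ^ N := by simp [w]
  have hwN_pos : 0 < w N := by rw [hwN]; positivity
  have hW : ∑ k ∈ range (N + 1), w k = 4 ^ N := by
    rw [sum_range_choose_mul_pow]; norm_num
  have hN_mem : N ∈ range (N + 1) := self_mem_range_succ N
  have hmass := sum_mul_ite_eq_inv _ w hN_mem hwN_pos.ne'
  have hdist := sum_mul_abs_ite_sub_inv_sum _ w (fun k _ => by positivity) hN_mem hwN_pos
  rw [hwN] at hmass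
  rw [hW, hwN, ← div_pow] at hdist
  simp only [hp]
  exact ⟨hmass, hdist⟩

theorem all_correct_strategy_L1_MD (N : ℕ) (hN : 1 ≤ N) (p : ℕ → ℝ)
    (hp : ∀ k, p k = if k = N then ((3 : ℝ) ^ N)⁻¹ else 0) :
    (∑ k ∈ Finset.range (N + 1), (N.choose k : ℝ) * 3 ^ k * p k = 1) ∧
    ∑ k ∈ Finset.range (N + 1),
        (N.choose k : ℝ) * 3 ^ k * |p k - ((4 : ℝ) ^ N)⁻¹|
      = 2 * (1 - (3/4) ^ N) :=
  all_correct_strategy_L1_MD_general N p hp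
end

section
/- Suppose for each of N runs the conditional settings distribution given the hidden variable is the optimal one-shot attack with parameter P, applied independently across runs. Then the N-run measurement dependence P_{(N)} := max over settings strings y and hidden-variable strings x of p(y|x) equals P^N, and the N-run CHSH score (averaged over runs) equals 24P − 4, the same as the one-shot score. -/
/-!
Under independent repetition the probability of a settings string is the product of one-shot
probabilities, each at most `P` (as `1 - 3P ≤ P` for `P ≥ 1/4`), with equality e.g. on the
all-zero strings. The number of runs with `x_n + y_n ≠ 3` is a sum of indicators, so by
linearity its expectation is the sum of the one-shot expectations: the marginal of each run
is the one-shot kernel, giving `3P` per run whatever the hidden string.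
-/

open Finset

section ProductKernel

variable {ι β R : Type*} [Fintype ι] [DecidableEq ι] [Fintype β] [CommSemiring R]

theorem sum_pi_prod_mul_apply (g : ι → β → R) (hg : ∀ i, ∑ b, g i b = 1) (i : ι) (f : β → R) :
    ∑ y : ι → β, (∏ m, g m (y m)) * f (y i) = ∑ b, g i b * f b := by
  have hfactor : ∀ y : ι → β, (∏ m, g m (y m)) * f (y i) =
      ∏ m, g m (y m) * (if m = i then f (y m) else 1) := fun y => by
    rw [prod_mul_distrib, prod_ite_eq' univ i fun m => f (y m), if_pos (mem_univ i)]
  have hmarginal : ∀ m, ∑ b, g m b * (if m = i then f b else 1) =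
      if m = i then ∑ b, g i b * f b else 1 := fun m => by
    split_ifs with h
    · subst h; rfl
    · simpa using hg m
  simp_rw [hfactor, ← Fintype.prod_sum fun m b => g m b * (if m = i then f b else 1), hmarginal,
    prod_ite_eq' univ i, if_pos (mem_univ i)]

theorem sum_pi_prod_mul_card_filter (g : ι → β → R) (hg : ∀ i, ∑ b, g i b = 1)
    (p : ι → β → Prop) [∀ i, DecidablePred (p i)] :
    ∑ y : ι → β, (∏ m, g m (y m)) * ((univ.filter fun n => p n (y n)).card : R) =
      ∑ n, ∑ b ∈ univ.filter (p n), g n b := by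
  simp_rw [card_filter, Nat.cast_sum, Nat.cast_ite, Nat.cast_one, Nat.cast_zero, mul_sum]
  rw [sum_comm]
  refine sum_congr rfl fun n _ => ?_
  rw [sum_pi_prod_mul_apply g hg n fun b => if p n b then 1 else 0, sum_filter]
  simp only [mul_ite, mul_one, mul_zero]

end ProductKernel

section OneShotAttack

variable {P : ℝ} {q : Fin 4 → Fin 4 → ℝ}

theorem oneShot_sum_eq_one (hq : ∀ x y, q x y = if (x : ℕ) + (y : ℕ) = 3 then 1 - 3 * P else P)
    (x : Fin 4) : ∑ y, q x y = 1 := by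
  fin_cases x <;> simp [hq, Fin.sum_univ_four] <;> ring

theorem oneShot_sum_filter_ne (hq : ∀ x y, q x y = if (x : ℕ) + (y : ℕ) = 3 then 1 - 3 * P else P)
    (x : Fin 4) : ∑ y ∈ univ.filter (fun y : Fin 4 => (x : ℕ) + (y : ℕ) ≠ 3), q x y = 3 * P := by
  have hcard : (univ.filter fun y : Fin 4 => (x : ℕ) + (y : ℕ) ≠ 3).card = 3 := by
    fin_cases x <;> decide
  rw [sum_congr rfl fun y hy => (hq x y).trans (if_neg (mem_filter.1 hy).2), sum_const, hcard,
    nsmul_eq_mul, Nat.cast_ofNat]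

theorem oneShot_le (hP : P ∈ Set.Icc (1/4 : ℝ) (1/3))
    (hq : ∀ x y, q x y = if (x : ℕ) + (y : ℕ) = 3 then 1 - 3 * P else P) (x y : Fin 4) :
    0 ≤ q x y ∧ q x y ≤ P := by
  obtain ⟨hP₁, hP₂⟩ := hP
  rw [hq]
  split_ifs <;> constructor <;> linarith

end OneShotAttack

theorem repeated_one_shot_attack (N : ℕ) (hN : 1 ≤ N) (P : ℝ)
    (hP : P ∈ Set.Icc (1/4 : ℝ) (1/3))
    (q : Fin 4 → Fin 4 → ℝ)
    (hq : ∀ x y, q x y = if (x : ℕ) + (y : ℕ) = 3 then 1 - 3 * P else P) :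
    ((∀ x y : Fin N → Fin 4, ∏ n : Fin N, q (x n) (y n) ≤ P ^ N) ∧
      ∃ x y : Fin N → Fin 4, ∏ n : Fin N, q (x n) (y n) = P ^ N) ∧
    (8 / N) * ∑ x : Fin N → Fin 4, ((4 : ℝ) ^ N)⁻¹ *
        ∑ y : Fin N → Fin 4, (∏ n : Fin N, q (x n) (y n)) *
          ((univ.filter (fun n : Fin N => (x n : ℕ) + (y n : ℕ) ≠ 3)).card : ℝ)
      - 4 = 24 * P - 4 := by
  refine ⟨⟨fun x y => ?_, ⟨0, 0, by simp [hq]⟩⟩, ?_⟩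
  · calc ∏ n, q (x n) (y n) ≤ ∏ _n : Fin N, P :=
          prod_le_prod (fun n _ => (oneShot_le hP hq _ _).1) fun n _ => (oneShot_le hP hq _ _).2
      _ = P ^ N := by rw [prod_const, card_univ, Fintype.card_fin]
  · have hexpected : ∀ x : Fin N → Fin 4,
        ∑ y : Fin N → Fin 4, (∏ n, q (x n) (y n)) *
          ((univ.filter fun n => (x n : ℕ) + (y n : ℕ) ≠ 3).card : ℝ) = N * (3 * P) := fun x => by
      rw [sum_pi_prod_mul_card_filter (fun n => q (x n)) (fun n => oneShot_sum_eq_one hq (x n))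
        fun n b => (x n : ℕ) + (b : ℕ) ≠ 3]
      simp [oneShot_sum_filter_ne hq]
    have hN₀ : (N : ℝ) ≠ 0 := Nat.cast_ne_zero.2 (by omega)
    simp_rw [hexpected, sum_const, card_univ, Fintype.card_fun, Fintype.card_fin, nsmul_eq_mul,
      Nat.cast_pow, Nat.cast_ofNat]
    field_simp
    ring
end
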